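/- For any n×p matrix Φ, positive integers k, k₁,…,k_l with k + Σᵢ kᵢ ≤ p, the restricted orthogonality constant satisfies θ_{k, k₁+⋯+k_l}(Φ) ≤ √(Σᵢ θ_{k,kᵢ}(Φ)²) ≤ √(Σᵢ δ_{k+kᵢ}(Φ)²). -/

import Mathlib

noncomputable def l2norm {p : ℕ} (c : Fin p → ℝ) : ℝ := Real.sqrt (∑ i, (c i)^2)

def IsSparse {p : ℕ} (k : ℕ) (c : Fin p → ℝ) : Prop :=
  (Finset.univ.filter (fun i => c i ≠ 0)).card ≤ k

/-- The restricted isometry constant `δ_k(Φ)`. -/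
noncomputable def ripConst {n p : ℕ} (Φ : Matrix (Fin n) (Fin p) ℝ) (k : ℕ) : ℝ :=
  sInf {δ : ℝ | 0 ≤ δ ∧ ∀ c : Fin p → ℝ, IsSparse k c →
    (1 - δ) * ∑ i, (c i)^2 ≤ (∑ i, (Φ.mulVec c i)^2) ∧
    (∑ i, (Φ.mulVec c i)^2) ≤ (1 + δ) * ∑ i, (c i)^2}

/-- The restricted orthogonality constant `θ_{k,k'}(Φ)`. -/
noncomputable def roConst {n p : ℕ} (Φ : Matrix (Fin n) (Fin p) ℝ) (k k' : ℕ) : ℝ :=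
  sInf {θ : ℝ | 0 ≤ θ ∧ ∀ c c' : Fin p → ℝ, IsSparse k c → IsSparse k' c' →
    (∀ i, c i = 0 ∨ c' i = 0) →
    |∑ i, (Φ.mulVec c i) * (Φ.mulVec c' i)| ≤ θ * l2norm c * l2norm c'}


/-!
Splitting an `(a + b)`-sparse vector `c'` into an `a`-sparse and a `b`-sparse part `u + v` with
disjoint supports gives `|⟨Φc, Φc'⟩| ≤ ‖c‖ (θ_{k,a} ‖u‖ + θ_{k,b} ‖v‖)`, and Cauchy–Schwarz with
`‖u‖² + ‖v‖² = ‖c'‖²` yields `θ_{k,a+b} ≤ √(θ_{k,a}² + θ_{k,b}²)`; induction on the number of blocks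
gives the first bound. For the second, polarization `4⟨Φu, Φv⟩ = ‖Φ(u+v)‖² - ‖Φ(u-v)‖²` with
`‖u ± v‖² = ‖u‖² + ‖v‖²` for disjoint `u, v` shows `θ_{k,k'} ≤ δ_{k+k'}`. Both constants are
infima of closed sets, so they satisfy their own defining inequalities.
-/

open Finset Matrix

section Sparse

variable {p k k' : ℕ} {u v w : Fin p → ℝ}

theorem IsSparse.mono (hu : IsSparse k u) (hw : ∀ i, u i = 0 → w i = 0) : IsSparse k w :=
  (card_le_card fun i hi ↦ by
    simp only [mem_filter, mem_univ, true_and] at hi ⊢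
    exact fun h ↦ hi (hw i h)) |>.trans hu

theorem IsSparse.of_forall_eq_zero (hu : IsSparse k u) (hv : IsSparse k' v)
    (hw : ∀ i, u i = 0 → v i = 0 → w i = 0) : IsSparse (k + k') w := by
  refine (card_le_card fun i hi ↦ ?_).trans ((card_union_le _ _).trans (add_le_add hu hv))
  simp only [mem_union, mem_filter, mem_univ, true_and] at hi ⊢
  tauto

theorem IsSparse.smul (hu : IsSparse k u) (s : ℝ) : IsSparse k (s • u) :=
  hu.mono fun i h ↦ by simp [h]

theorem IsSparse.add (hu : IsSparse k u) (hv : IsSparse k' v) : IsSparse (k + k') (u + v) :=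
  hu.of_forall_eq_zero hv fun i h h' ↦ by simp [h, h']

theorem IsSparse.sub (hu : IsSparse k u) (hv : IsSparse k' v) : IsSparse (k + k') (u - v) :=
  hu.of_forall_eq_zero hv fun i h h' ↦ by simp [h, h']

theorem isSparse_zero_iff : IsSparse 0 u ↔ u = 0 := by
  simp [IsSparse, filter_eq_empty_iff, funext_iff]

theorem IsSparse.exists_split {a b : ℕ} (hu : IsSparse (a + b) u) :
    ∃ s : Set (Fin p), IsSparse a (s.indicator u) ∧ IsSparse b (sᶜ.indicator u) := by
  set S := univ.filter fun i ↦ u i ≠ 0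
  obtain ⟨T, hTS, hT⟩ := exists_subset_card_eq (min_le_right a #S)
  have hfirst : univ.filter (fun i ↦ (T : Set (Fin p)).indicator u i ≠ 0) ⊆ T := fun i hi ↦ by
    simp only [mem_filter, mem_univ, true_and, Set.indicator_apply_ne_zero] at hi
    exact hi.1
  have hsecond : univ.filter (fun i ↦ (T : Set (Fin p))ᶜ.indicator u i ≠ 0) ⊆ S \ T :=
    fun i hi ↦ by simp_all [S]
  have hS : #S ≤ a + b := hu
  refine ⟨T, (card_le_card hfirst).trans (hT.trans_le (min_le_left _ _)),
    (card_le_card hsecond).trans ?_⟩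
  rw [card_sdiff_of_subset hTS, hT]
  omega

end Sparse

section Norm

variable {p : ℕ} (c : Fin p → ℝ)

theorem l2norm_nonneg : 0 ≤ l2norm c := Real.sqrt_nonneg _

theorem sq_l2norm : l2norm c ^ 2 = ∑ i, c i ^ 2 := Real.sq_sqrt (by positivity)

theorem l2norm_eq_zero_iff : l2norm c = 0 ↔ c = 0 := by
  rw [l2norm, Real.sqrt_eq_zero (by positivity),
    Fintype.sum_eq_zero_iff_of_nonneg fun i ↦ sq_nonneg (c i)]
  simp [funext_iff]

theorem sum_sq_mulVec_le {n : ℕ} (Φ : Matrix (Fin n) (Fin p) ℝ) :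
    ∑ i, (Φ *ᵥ c) i ^ 2 ≤ (∑ i, ∑ j, Φ i j ^ 2) * ∑ j, c j ^ 2 := by
  rw [sum_mul]
  exact sum_le_sum fun i _ ↦ sum_mul_sq_le_sq_mul_sq univ (Φ i) c

end Norm

section Constants

variable {n p : ℕ} (Φ : Matrix (Fin n) (Fin p) ℝ)

-- `ripConst Φ k` and `roConst Φ k k'` are, by definition, the infima of these sets.
def ripSet (k : ℕ) : Set ℝ :=
  {δ : ℝ | 0 ≤ δ ∧ ∀ c : Fin p → ℝ, IsSparse k c →
    (1 - δ) * ∑ i, c i ^ 2 ≤ ∑ i, (Φ *ᵥ c) i ^ 2 ∧ ∑ i, (Φ *ᵥ c) i ^ 2 ≤ (1 + δ) * ∑ i, c i ^ 2}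

def roSet (k k' : ℕ) : Set ℝ :=
  {θ : ℝ | 0 ≤ θ ∧ ∀ c c' : Fin p → ℝ, IsSparse k c → IsSparse k' c' →
    (∀ i, c i = 0 ∨ c' i = 0) →
    |∑ i, (Φ *ᵥ c) i * (Φ *ᵥ c') i| ≤ θ * l2norm c * l2norm c'}

theorem isClosed_ripSet (k : ℕ) : IsClosed (ripSet Φ k) := by
  simp only [ripSet, Set.ofPred_and, Set.ofPred_forall]
  refine isClosed_Ici.inter (isClosed_iInter fun c ↦ isClosed_iInter fun _ ↦ ?_)
  exact (isClosed_le (by fun_prop) (by fun_prop)).inter (isClosed_le (by fun_prop) (by fun_prop))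

theorem isClosed_roSet (k k' : ℕ) : IsClosed (roSet Φ k k') := by
  simp only [roSet, Set.ofPred_and, Set.ofPred_forall]
  exact isClosed_Ici.inter (isClosed_iInter fun c ↦ isClosed_iInter fun c' ↦
    isClosed_iInter fun _ ↦ isClosed_iInter fun _ ↦ isClosed_iInter fun _ ↦
      isClosed_le (by fun_prop) (by fun_prop))

theorem one_add_frobenius_mem_ripSet (k : ℕ) : 1 + ∑ i, ∑ j, Φ i j ^ 2 ∈ ripSet Φ k := by
  refine ⟨by positivity, fun c _ ↦ ⟨?_, ?_⟩⟩ <;>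
  nlinarith [sum_sq_mulVec_le c Φ, sum_nonneg fun i (_ : i ∈ univ) ↦ sq_nonneg (c i),
    sum_nonneg fun i (_ : i ∈ univ) ↦ sq_nonneg ((Φ *ᵥ c) i)]

theorem ripConst_mem_ripSet (k : ℕ) : ripConst Φ k ∈ ripSet Φ k :=
  (isClosed_ripSet Φ k).csInf_mem ⟨_, one_add_frobenius_mem_ripSet Φ k⟩ ⟨0, fun _ h ↦ h.1⟩

theorem two_mul_abs_sum_mulVec_mul_le {k k' : ℕ} {δ : ℝ} (hδ : δ ∈ ripSet Φ (k + k'))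
    {u v : Fin p → ℝ} (hu : IsSparse k u) (hv : IsSparse k' v) (huv : ∀ i, u i = 0 ∨ v i = 0) :
    2 * |∑ i, (Φ *ᵥ u) i * (Φ *ᵥ v) i| ≤ δ * (∑ i, u i ^ 2 + ∑ i, v i ^ 2) := by
  have hsq : ∀ i, (u i + v i) ^ 2 = u i ^ 2 + v i ^ 2 ∧ (u i - v i) ^ 2 = u i ^ 2 + v i ^ 2 :=
    fun i ↦ by rcases huv i with h | h <;> simp [h]
  have hplus : ∑ i, (u + v) i ^ 2 = ∑ i, u i ^ 2 + ∑ i, v i ^ 2 := by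
    simp only [Pi.add_apply, hsq, sum_add_distrib]
  have hminus : ∑ i, (u - v) i ^ 2 = ∑ i, u i ^ 2 + ∑ i, v i ^ 2 := by
    simp only [Pi.sub_apply, hsq, sum_add_distrib]
  have polarization : 4 * ∑ i, (Φ *ᵥ u) i * (Φ *ᵥ v) i =
      ∑ i, (Φ *ᵥ (u + v)) i ^ 2 - ∑ i, (Φ *ᵥ (u - v)) i ^ 2 := by
    simp only [mulVec_add, mulVec_sub, Pi.add_apply, Pi.sub_apply, mul_sum, ← sum_sub_distrib]
    exact sum_congr rfl fun i _ ↦ by ring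
  obtain ⟨hplus_lower, hplus_upper⟩ := hδ.2 _ (hu.add hv)
  obtain ⟨hminus_lower, hminus_upper⟩ := hδ.2 _ (hu.sub hv)
  rw [hplus] at hplus_lower hplus_upper
  rw [hminus] at hminus_lower hminus_upper
  have h : |∑ i, (Φ *ᵥ u) i * (Φ *ᵥ v) i| ≤ δ * (∑ i, u i ^ 2 + ∑ i, v i ^ 2) / 2 :=
    abs_le.2 ⟨by linarith, by linarith⟩
  linarith

theorem ripSet_subset_roSet (k k' : ℕ) : ripSet Φ (k + k') ⊆ roSet Φ k k' := by
  intro δ hδ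
  refine ⟨hδ.1, fun c c' hc hc' hcc' ↦ ?_⟩
  rcases (l2norm_nonneg c).eq_or_lt with ha | ha
  · rw [← ha]; simp [(l2norm_eq_zero_iff c).1 ha.symm]
  rcases (l2norm_nonneg c').eq_or_lt with hb | hb
  · rw [← hb]; simp [(l2norm_eq_zero_iff c').1 hb.symm]
  -- rescale `c` by `‖c'‖` and `c'` by `‖c‖`, so that both have squared norm `‖c‖ * ‖c'‖`
  have key := two_mul_abs_sum_mulVec_mul_le Φ hδ (hc.smul (l2norm c')) (hc'.smul (l2norm c))
    fun i ↦ (hcc' i).imp (fun h ↦ by simp [h]) fun h ↦ by simp [h]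
  simp only [mulVec_smul, Pi.smul_apply, smul_eq_mul, mul_pow, ← mul_sum, ← sq_l2norm] at key
  have hscale : ∑ i, l2norm c' * (Φ *ᵥ c) i * (l2norm c * (Φ *ᵥ c') i) =
      l2norm c * l2norm c' * ∑ i, (Φ *ᵥ c) i * (Φ *ᵥ c') i := by
    rw [mul_sum]; exact sum_congr rfl fun i _ ↦ by ring
  have hpos : 0 < 2 * (l2norm c * l2norm c') := by positivity
  rw [hscale, abs_mul, abs_of_pos (mul_pos ha hb)] at key
  refine le_of_mul_le_mul_left ?_ hpos
  linarith

theorem roConst_mem_roSet (k k' : ℕ) : roConst Φ k k' ∈ roSet Φ k k' :=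
  (isClosed_roSet Φ k k').csInf_mem ⟨_, ripSet_subset_roSet Φ k k' (ripConst_mem_ripSet Φ _)⟩
    ⟨0, fun _ h ↦ h.1⟩

theorem roConst_nonneg (k k' : ℕ) : 0 ≤ roConst Φ k k' := (roConst_mem_roSet Φ k k').1

theorem roConst_le_ripConst (k k' : ℕ) : roConst Φ k k' ≤ ripConst Φ (k + k') :=
  csInf_le ⟨0, fun _ h ↦ h.1⟩ (ripSet_subset_roSet Φ k k' (ripConst_mem_ripSet Φ _))

theorem abs_sum_mulVec_mul_le_roConst {k k' : ℕ} {c c' : Fin p → ℝ} (hc : IsSparse k c)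
    (hc' : IsSparse k' c') (hcc' : ∀ i, c i = 0 ∨ c' i = 0) :
    |∑ i, (Φ *ᵥ c) i * (Φ *ᵥ c') i| ≤ roConst Φ k k' * l2norm c * l2norm c' :=
  (roConst_mem_roSet Φ k k').2 c c' hc hc' hcc'

theorem roConst_zero_right (k : ℕ) : roConst Φ k 0 = 0 := by
  refine le_antisymm (csInf_le ⟨0, fun _ h ↦ h.1⟩ ⟨le_rfl, fun c c' _ hc' _ ↦ ?_⟩)
    (roConst_nonneg Φ k 0)
  simp [isSparse_zero_iff.1 hc']

theorem roConst_add_le (k a b : ℕ) :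
    roConst Φ k (a + b) ≤ √(roConst Φ k a ^ 2 + roConst Φ k b ^ 2) := by
  refine csInf_le ⟨0, fun _ h ↦ h.1⟩ ⟨Real.sqrt_nonneg _, fun c c' hc hc' hcc' ↦ ?_⟩
  obtain ⟨s, hu, hv⟩ := hc'.exists_split
  set u := s.indicator c'
  set v := sᶜ.indicator c'
  have hcu : ∀ i, c i = 0 ∨ u i = 0 := fun i ↦ (hcc' i).imp_right fun h ↦ by simp [u, h]
  have hcv : ∀ i, c i = 0 ∨ v i = 0 := fun i ↦ (hcc' i).imp_right fun h ↦ by simp [v, h]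
  have hsplit : ∑ i, (Φ *ᵥ c) i * (Φ *ᵥ c') i =
      ∑ i, (Φ *ᵥ c) i * (Φ *ᵥ u) i + ∑ i, (Φ *ᵥ c) i * (Φ *ᵥ v) i := by
    rw [← s.indicator_self_add_compl c', mulVec_add]
    simp only [Pi.add_apply, mul_add, sum_add_distrib]
    rfl
  have hnorm : l2norm c' = √(l2norm u ^ 2 + l2norm v ^ 2) := by
    rw [sq_l2norm, sq_l2norm, ← sum_add_distrib, l2norm]
    congr 1
    refine sum_congr rfl fun i _ ↦ ?_
    by_cases h : i ∈ s <;> simp [u, v, h]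
  have cauchySchwarz := Real.sum_mul_le_sqrt_mul_sqrt univ
    ![roConst Φ k a, roConst Φ k b] ![l2norm u, l2norm v]
  simp only [Fin.sum_univ_two, Matrix.cons_val_zero, Matrix.cons_val_one] at cauchySchwarz
  calc |∑ i, (Φ *ᵥ c) i * (Φ *ᵥ c') i|
      ≤ roConst Φ k a * l2norm c * l2norm u + roConst Φ k b * l2norm c * l2norm v := by
        rw [hsplit]
        exact (abs_add_le _ _).trans (add_le_add (abs_sum_mulVec_mul_le_roConst Φ hc hu hcu)
          (abs_sum_mulVec_mul_le_roConst Φ hc hv hcv))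
    _ = l2norm c * (roConst Φ k a * l2norm u + roConst Φ k b * l2norm v) := by ring
    _ ≤ l2norm c * (√(roConst Φ k a ^ 2 + roConst Φ k b ^ 2) * l2norm c') := by
        rw [hnorm]; gcongr; exact l2norm_nonneg c
    _ = √(roConst Φ k a ^ 2 + roConst Φ k b ^ 2) * l2norm c * l2norm c' := by ring

theorem roConst_sum_le (k : ℕ) {l : ℕ} (ks : Fin l → ℕ) :
    roConst Φ k (∑ i, ks i) ≤ √(∑ i, roConst Φ k (ks i) ^ 2) := by
  induction l with
  | zero => simp [roConst_zero_right]
  | succ m ih =>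
    rw [Fin.sum_univ_succ, Fin.sum_univ_succ]
    refine (roConst_add_le Φ k _ _).trans (Real.sqrt_le_sqrt (add_le_add le_rfl ?_))
    rw [← Real.sq_sqrt (by positivity : 0 ≤ ∑ i : Fin m, roConst Φ k (ks i.succ) ^ 2)]
    exact pow_le_pow_left₀ (roConst_nonneg Φ k _) (ih _) 2

end Constants

theorem roConst_sum_bound_general (n p l k : ℕ) (Φ : Matrix (Fin n) (Fin p) ℝ)
    (ks : Fin l → ℕ) :
    roConst Φ k (∑ i, ks i) ≤ Real.sqrt (∑ i, (roConst Φ k (ks i))^2) ∧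
      Real.sqrt (∑ i, (roConst Φ k (ks i))^2) ≤
        Real.sqrt (∑ i, (ripConst Φ (k + ks i))^2) :=
  ⟨roConst_sum_le Φ k ks, Real.sqrt_le_sqrt <| sum_le_sum fun i _ ↦
    pow_le_pow_left₀ (roConst_nonneg Φ k (ks i)) (roConst_le_ripConst Φ k (ks i)) 2⟩

theorem roConst_sum_bound (n p l k : ℕ) (Φ : Matrix (Fin n) (Fin p) ℝ)
    (ks : Fin l → ℕ) (hk : 0 < k) (hks : ∀ i, 0 < ks i)
    (hp : k + ∑ i, ks i ≤ p) :
    roConst Φ k (∑ i, ks i) ≤ Real.sqrt (∑ i, (roConst Φ k (ks i))^2) ∧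
      Real.sqrt (∑ i, (roConst Φ k (ks i))^2) ≤
        Real.sqrt (∑ i, (ripConst Φ (k + ks i))^2) :=
  roConst_sum_bound_general n p l k Φ ks
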